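/- For ν ∈ ℤ[1/n], c ∈ ℤ, and α ∈ ℤ[1/n]*, β ∈ ℤ[1/n], the automorphism φ_{α,β} of BS(n,1) maps a^ν t^c to a^{να + ((n^c - 1)/(n-1))β} t^c. -/
import Mathlib


/-- The single defining relator of the Baumslag–Solitar group `BS(n,1)`:
`t⁻¹ * aⁿ * t * a⁻¹`, where `a = FreeGroup.of false`, `t = FreeGroup.of true`. -/
def BSrel (n : ℤ) : Set (FreeGroup Bool) :=
  {(FreeGroup.of true)⁻¹ * (FreeGroup.of false) ^ n * FreeGroup.of true * (FreeGroup.of false)⁻¹}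

/-- The solvable Baumslag–Solitar group `BS(n,1) = ⟨a, t ∣ t⁻¹aⁿt = a⟩`. -/
abbrev BS (n : ℤ) : Type := PresentedGroup (BSrel n)

/-- The generator `a` of `BS(n,1)`. -/
def BSa (n : ℤ) : BS n := PresentedGroup.of false

/-- The generator `t` of `BS(n,1)`. -/
def BSt (n : ℤ) : BS n := PresentedGroup.of true

/-- `apow n k p` represents `a^(k/nᵖ) := t⁻ᵖ aᵏ tᵖ` in `BS(n,1)`. -/
def apow (n k p : ℤ) : BS n := (BSt n) ^ (-p) * (BSa n) ^ k * (BSt n) ^ p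

lemma BS.rel (n : ℤ) : (BSt n)⁻¹ * (BSa n) ^ n * BSt n = BSa n := by
  have hmem : ((FreeGroup.of true)⁻¹ * (FreeGroup.of false) ^ n * FreeGroup.of true *
      (FreeGroup.of false)⁻¹ : FreeGroup Bool) ∈ Subgroup.normalClosure (BSrel n) :=
    Subgroup.subset_normalClosure rfl
  have h1 : PresentedGroup.mk (BSrel n) ((FreeGroup.of true)⁻¹ * (FreeGroup.of false) ^ n *
      FreeGroup.of true * (FreeGroup.of false)⁻¹) = 1 := (QuotientGroup.eq_one_iff _).mpr hmem
  simp only [map_mul, map_inv, map_zpow] at h1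
  have h2 : (BSt n)⁻¹ * (BSa n) ^ n * BSt n * (BSa n)⁻¹ = 1 := h1
  exact mul_inv_eq_one.mp h2

lemma BS.conj_t (n k : ℤ) : (BSt n)⁻¹ * (BSa n) ^ (n * k) * BSt n = (BSa n) ^ k := by
  have h : (MulAut.conj (BSt n)⁻¹) ((BSa n) ^ n) = BSa n := by
    simp [MulAut.conj_apply, mul_assoc, BS.rel n]
  have h2 := congrArg (· ^ k) h
  simp only [← map_zpow, ← zpow_mul] at h2
  simpa [MulAut.conj_apply, mul_assoc] using h2

lemma apow_succ (n k p : ℤ) : apow n (n * k) (p + 1) = apow n k p := by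
  have : apow n (n * k) (p + 1)
      = (BSt n) ^ (-p) * ((BSt n)⁻¹ * (BSa n) ^ (n * k) * BSt n) * (BSt n) ^ p := by
    unfold apow; group
  rw [this, BS.conj_t]; rfl

lemma apow_shift (n k p : ℤ) (d : ℕ) : apow n (n ^ d * k) (p + d) = apow n k p := by
  induction d generalizing k p with
  | zero => simp
  | succ d ih =>
      have h1 : (n : ℤ) ^ (d + 1) * k = n ^ d * (n * k) := by ring
      have h2 : (p + ((d : ℕ) + 1 : ℕ) : ℤ) = (p + 1) + (d : ℤ) := by push_cast; ring
      rw [h1, h2, ih (n * k) (p + 1), apow_succ]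

lemma apow_add (n k k' p : ℤ) : apow n k p * apow n k' p = apow n (k + k') p := by
  unfold apow; rw [zpow_add]; group

lemma apow_zero (n p : ℤ) : apow n 0 p = 1 := by unfold apow; group

lemma apow_inv (n k p : ℤ) : (apow n k p)⁻¹ = apow n (-k) p := by unfold apow; group

lemma t_mul_apow (n k p c : ℤ) : (BSt n) ^ c * apow n k p = apow n k (p - c) * (BSt n) ^ c := by
  unfold apow; group

def Sg (n : ℤ) (d : ℕ) : ℤ := ∑ i ∈ Finset.range d, n ^ i

lemma apow_t_pow (n l q : ℤ) (d : ℕ) :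
    (apow n l q * BSt n) ^ d = apow n (l * Sg n d) q * (BSt n) ^ (d : ℤ) := by
  induction d with
  | zero => simp [Sg, apow_zero]
  | succ d ih =>
      rw [pow_succ, ih]
      have h1 : (BSt n) ^ (d : ℤ) * apow n l q = apow n l (q - d) * (BSt n) ^ (d : ℤ) :=
        t_mul_apow n l q d
      have h2 : apow n l (q - d) = apow n (n ^ d * l) q := by
        have := apow_shift n l (q - d) d
        rw [sub_add_cancel] at this
        rw [this]
      calc apow n (l * Sg n d) q * (BSt n) ^ (d : ℤ) * (apow n l q * BSt n)
          = apow n (l * Sg n d) q * ((BSt n) ^ (d : ℤ) * apow n l q) * BSt n := by group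
        _ = apow n (l * Sg n d) q * apow n (n ^ d * l) q * ((BSt n) ^ (d : ℤ) * BSt n) := by
            rw [h1, h2]; group
        _ = apow n (l * Sg n (d + 1)) q * (BSt n) ^ ((d : ℤ) + 1) := by
            have hS : l * Sg n d + n ^ d * l = l * Sg n (d + 1) := by
              simp [Sg, Finset.sum_range_succ]; ring
            rw [apow_add, hS]; group
        _ = apow n (l * Sg n (d + 1)) q * (BSt n) ^ (((d : ℕ) + 1 : ℕ) : ℤ) := by push_cast; ring_nf

lemma apow_zpow (n k p m : ℤ) : (apow n k p) ^ m = apow n (k * m) p := by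
  have h : apow n k p = (BSt n) ^ (-p) * (BSa n) ^ k * ((BSt n) ^ (-p))⁻¹ := by
    unfold apow; rw [← zpow_neg, neg_neg]
  rw [h, conj_zpow, ← zpow_mul]
  unfold apow; rw [← zpow_neg, neg_neg]

lemma apow_t_zpow_neg (n l q : ℤ) (d : ℕ) :
    (apow n l q * BSt n) ^ (-(d : ℤ))
      = apow n (-(l * Sg n d)) (q + d) * (BSt n) ^ (-(d : ℤ)) := by
  have h1 : (apow n l q * BSt n) ^ (-(d : ℤ)) = ((apow n l q * BSt n) ^ (d : ℕ))⁻¹ := by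
    rw [zpow_neg, zpow_natCast]
  rw [h1, apow_t_pow, mul_inv_rev, apow_inv, ← zpow_neg]
  have h2 := t_mul_apow n (-(l * Sg n d)) q (-(d : ℤ))
  rw [sub_neg_eq_add] at h2
  rw [h2]

lemma apow_lift (n k p : ℤ) (d : ℕ) (p' : ℤ) (hp' : p' = p + d) :
    apow n k p = apow n (n ^ d * k) p' := by
  rw [hp', apow_shift]

lemma apow_congr (n k p k' p' : ℤ) (hp : 0 ≤ p) (hp' : 0 ≤ p')
    (h : k * n ^ p'.toNat = k' * n ^ p.toNat) : apow n k p = apow n k' p' := by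
  rw [apow_lift n k p p'.toNat (p + p'.toNat) rfl,
      apow_lift n k' p' p.toNat (p' + p.toNat) rfl]
  have h1 : (n : ℤ) ^ p'.toNat * k = n ^ p.toNat * k' := by
    rw [mul_comm, h, mul_comm]
  have h2 : p + (p'.toNat : ℤ) = p' + (p.toNat : ℤ) := by omega
  rw [h1, h2]

lemma Sg_geom (n : ℤ) (d : ℕ) : ((Sg n d : ℤ) : ℚ) * ((n:ℚ) - 1) = (n:ℚ)^d - 1 := by
  push_cast [Sg]
  exact geom_sum_mul _ _

/-- For `ν = m/n^r ∈ ℤ[1/n]`, `c ∈ ℤ`, `α = k/nᵖ ∈ ℤ[1/n]*` and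
`β = l/n^q ∈ ℤ[1/n]`, the automorphism `φ_{α,β}` of `BS(n,1)` (sending `a ↦ a^α`,
`t ↦ a^β t`) maps `a^ν t^c` to `a^{να + ((n^c-1)/(n-1))β} t^c`, the image exponent being
represented as `m'/n^{r'}`.  (Invertibility of `α` is expressed as `IsUnit` in the
subring `ℤ[1/n] = Subring.closure {1/n} ⊆ ℚ`.) -/
theorem stmt13 (n : ℤ) (hn : 2 ≤ n) (k p l q m r c m' r' : ℤ)
    (hp : 0 ≤ p) (hq : 0 ≤ q) (hr : 0 ≤ r) (hr' : 0 ≤ r')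
    (hmem : ((k : ℚ) / (n : ℚ) ^ p) ∈ Subring.closure {((n : ℚ))⁻¹})
    (hunit : IsUnit (⟨(k : ℚ) / (n : ℚ) ^ p, hmem⟩ : Subring.closure {((n : ℚ))⁻¹}))
    (h : (m' : ℚ) / (n : ℚ) ^ r'
        = ((m : ℚ) / (n : ℚ) ^ r) * ((k : ℚ) / (n : ℚ) ^ p)
          + (((n : ℚ) ^ c - 1) / ((n : ℚ) - 1)) * ((l : ℚ) / (n : ℚ) ^ q))
    (φ : BS n →* BS n)
    (ha : φ (BSa n) = apow n k p) (ht : φ (BSt n) = apow n l q * BSt n) :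
    φ (apow n m r * (BSt n) ^ c) = apow n m' r' * (BSt n) ^ c := by
  set P := p.toNat with hPdef
  set Q := q.toNat with hQdef
  set R := r.toNat with hRdef
  set R' := r'.toNat with hR'def
  have hP : (P : ℤ) = p := Int.toNat_of_nonneg hp
  have hQ : (Q : ℤ) = q := Int.toNat_of_nonneg hq
  have hR : (R : ℤ) = r := Int.toNat_of_nonneg hr
  have hR' : (R' : ℤ) = r' := Int.toNat_of_nonneg hr'
  -- expand φ
  have hφ : φ (apow n m r * (BSt n) ^ c)
      = (φ (BSt n)) ^ (-r) * (φ (BSa n)) ^ m * (φ (BSt n)) ^ r * (φ (BSt n)) ^ c := by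
    simp only [apow, map_mul, map_zpow]
  rw [hφ, ha, ht, apow_zpow]
  -- t-powers of φ(t)
  have htr : (apow n l q * BSt n) ^ r = apow n (l * Sg n R) q * (BSt n) ^ r := by
    conv_lhs => rw [← hR, zpow_natCast]
    rw [apow_t_pow, hR]
  have htnr : (apow n l q * BSt n) ^ (-r) = apow n (-(l * Sg n R)) (q + R) * (BSt n) ^ (-r) := by
    rw [← hR, apow_t_zpow_neg]
  rw [htr, htnr]
  have e2 : (BSt n) ^ (-r) * apow n (k * m) p = apow n (k * m) (p + r) * (BSt n) ^ (-r) := by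
    have := t_mul_apow n (k * m) p (-r); rwa [sub_neg_eq_add] at this
  have e3 : (BSt n) ^ (-r) * apow n (l * Sg n R) q
      = apow n (l * Sg n R) (q + r) * (BSt n) ^ (-r) := by
    have := t_mul_apow n (l * Sg n R) q (-r); rwa [sub_neg_eq_add] at this
  rcases le_or_gt 0 c with hc | hc
  · -- c ≥ 0
    set C := c.toNat with hCdef
    have hC : (C : ℤ) = c := Int.toNat_of_nonneg hc
    have htc : (apow n l q * BSt n) ^ c = apow n (l * Sg n C) q * (BSt n) ^ c := by
      conv_lhs => rw [← hC, zpow_natCast]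
      rw [apow_t_pow, hC]
    rw [htc]
    calc apow n (-(l * Sg n R)) (q + R) * (BSt n) ^ (-r) * apow n (k * m) p *
          (apow n (l * Sg n R) q * (BSt n) ^ r) * (apow n (l * Sg n C) q * (BSt n) ^ c)
        = apow n (-(l * Sg n R)) (q + R) * ((BSt n) ^ (-r) * apow n (k * m) p) *
          (apow n (l * Sg n R) q * (BSt n) ^ r) * (apow n (l * Sg n C) q * (BSt n) ^ c) := by
          group
      _ = apow n (-(l * Sg n R)) (q + R) * (apow n (k * m) (p + r) * (BSt n) ^ (-r)) *
          (apow n (l * Sg n R) q * (BSt n) ^ r) * (apow n (l * Sg n C) q * (BSt n) ^ c) := by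
          rw [e2]
      _ = apow n (-(l * Sg n R)) (q + R) * apow n (k * m) (p + r) *
          (((BSt n) ^ (-r) * apow n (l * Sg n R) q) * (BSt n) ^ r) *
          (apow n (l * Sg n C) q * (BSt n) ^ c) := by group
      _ = apow n (-(l * Sg n R)) (q + R) * apow n (k * m) (p + r) *
          ((apow n (l * Sg n R) (q + r) * (BSt n) ^ (-r)) * (BSt n) ^ r) *
          (apow n (l * Sg n C) q * (BSt n) ^ c) := by rw [e3]
      _ = apow n (-(l * Sg n R)) (q + R) * apow n (k * m) (p + r) *
          apow n (l * Sg n R) (q + r) * apow n (l * Sg n C) q * (BSt n) ^ c := by group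
      _ = apow n m' r' * (BSt n) ^ c := by
          rw [apow_lift n (-(l * Sg n R)) (q + R) P (p + q + r) (by omega),
              apow_lift n (k * m) (p + r) Q (p + q + r) (by omega),
              apow_lift n (l * Sg n R) (q + r) P (p + q + r) (by omega),
              apow_lift n (l * Sg n C) q (P + R) (p + q + r) (by push_cast; omega),
              apow_add, apow_add, apow_add]
          congr 1
          apply apow_congr n _ _ m' r' (by omega) hr'
          have hDt : (p + q + r).toNat = P + Q + R := by omega
          rw [hDt]
          have hn2 : (2:ℚ) ≤ (n:ℚ) := by exact_mod_cast hn
          have hn0 : (n:ℚ) ≠ 0 := by linarith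
          have hn1 : (n:ℚ) - 1 ≠ 0 := by linarith
          rw [← hP, ← hQ, ← hR, ← hR', ← hC] at h
          simp only [zpow_natCast] at h
          rw [show ((n:ℚ)^(C:ℕ) - 1)/((n:ℚ)-1) = ((Sg n C : ℤ) : ℚ) by
                rw [← Sg_geom n C]; field_simp] at h
          have h2 : (m':ℚ) * ((n:ℚ)^P * (n:ℚ)^Q * (n:ℚ)^R)
              = ((m:ℚ)*(k:ℚ)*(n:ℚ)^Q + ((Sg n C : ℤ):ℚ)*(l:ℚ)*((n:ℚ)^P*(n:ℚ)^R)) * (n:ℚ)^R' := by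
            field_simp at h
            linear_combination h
          have key : ((n ^ P * -(l * Sg n R) + n ^ Q * (k * m) + n ^ P * (l * Sg n R)
              + n ^ (P + R) * (l * Sg n C)) * n ^ R' : ℚ) = (m':ℚ) * (n:ℚ)^(P+Q+R) := by
            push_cast
            linear_combination -h2
          exact_mod_cast key
  · -- c < 0
    set C := (-c).toNat with hCdef
    have hC : (C : ℤ) = -c := Int.toNat_of_nonneg (by omega)
    have htc : (apow n l q * BSt n) ^ c
        = apow n (-(l * Sg n C)) (q + C) * (BSt n) ^ c := by
      rw [show c = -(C : ℤ) by omega, apow_t_zpow_neg]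
    rw [htc]
    calc apow n (-(l * Sg n R)) (q + R) * (BSt n) ^ (-r) * apow n (k * m) p *
          (apow n (l * Sg n R) q * (BSt n) ^ r) * (apow n (-(l * Sg n C)) (q + C) * (BSt n) ^ c)
        = apow n (-(l * Sg n R)) (q + R) * ((BSt n) ^ (-r) * apow n (k * m) p) *
          (apow n (l * Sg n R) q * (BSt n) ^ r) *
          (apow n (-(l * Sg n C)) (q + C) * (BSt n) ^ c) := by group
      _ = apow n (-(l * Sg n R)) (q + R) * (apow n (k * m) (p + r) * (BSt n) ^ (-r)) *
          (apow n (l * Sg n R) q * (BSt n) ^ r) *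
          (apow n (-(l * Sg n C)) (q + C) * (BSt n) ^ c) := by rw [e2]
      _ = apow n (-(l * Sg n R)) (q + R) * apow n (k * m) (p + r) *
          (((BSt n) ^ (-r) * apow n (l * Sg n R) q) * (BSt n) ^ r) *
          (apow n (-(l * Sg n C)) (q + C) * (BSt n) ^ c) := by group
      _ = apow n (-(l * Sg n R)) (q + R) * apow n (k * m) (p + r) *
          ((apow n (l * Sg n R) (q + r) * (BSt n) ^ (-r)) * (BSt n) ^ r) *
          (apow n (-(l * Sg n C)) (q + C) * (BSt n) ^ c) := by rw [e3]
      _ = apow n (-(l * Sg n R)) (q + R) * apow n (k * m) (p + r) *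
          apow n (l * Sg n R) (q + r) * apow n (-(l * Sg n C)) (q + C) * (BSt n) ^ c := by group
      _ = apow n m' r' * (BSt n) ^ c := by
          rw [apow_lift n (-(l * Sg n R)) (q + R) (P + C) (p + q + r + C) (by push_cast; omega),
              apow_lift n (k * m) (p + r) (Q + C) (p + q + r + C) (by push_cast; omega),
              apow_lift n (l * Sg n R) (q + r) (P + C) (p + q + r + C) (by push_cast; omega),
              apow_lift n (-(l * Sg n C)) (q + C) (P + R) (p + q + r + C) (by push_cast; omega),
              apow_add, apow_add, apow_add]
          congr 1
          apply apow_congr n _ _ m' r' (by omega) hr'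
          have hDt : (p + q + r + C).toNat = P + Q + R + C := by omega
          rw [hDt]
          have hn2 : (2:ℚ) ≤ (n:ℚ) := by exact_mod_cast hn
          have hn0 : (n:ℚ) ≠ 0 := by linarith
          have hn1 : (n:ℚ) - 1 ≠ 0 := by linarith
          rw [← hP, ← hQ, ← hR, ← hR', show c = -((C:ℤ)) by omega] at h
          simp only [zpow_natCast, zpow_neg] at h
          rw [show (((n:ℚ)^(C:ℕ))⁻¹ - 1)/((n:ℚ)-1) = -((Sg n C : ℤ) : ℚ)/(n:ℚ)^C by
                have hpow : (n:ℚ)^C ≠ 0 := by positivity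
                rw [div_eq_div_iff hn1 hpow, sub_mul, inv_mul_cancel₀ hpow]
                linear_combination Sg_geom n C] at h
          have h2 : (m':ℚ) * ((n:ℚ)^P * (n:ℚ)^Q * (n:ℚ)^R * (n:ℚ)^C)
              = ((m:ℚ)*(k:ℚ)*((n:ℚ)^Q*(n:ℚ)^C)
                - ((Sg n C : ℤ):ℚ)*(l:ℚ)*((n:ℚ)^P*(n:ℚ)^R)) * (n:ℚ)^R' := by
            field_simp at h
            linear_combination h
          have key : ((n ^ (P + C) * -(l * Sg n R) + n ^ (Q + C) * (k * m)
              + n ^ (P + C) * (l * Sg n R) + n ^ (P + R) * -(l * Sg n C)) * n ^ R' : ℚ)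
              = (m':ℚ) * (n:ℚ)^(P+Q+R+C) := by
            push_cast
            linear_combination -h2
          exact_mod_cast key
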